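/- arXiv:2403.09643 — 4 statements merged into one kernel-verified Lean document; each statement's English description precedes it below -/
import Mathlib

section
/- Let $(p_k)_{k \in \mathbb{N}}$ be a sequence of real polynomials satisfying the Appell property: $p_0' = 0$ and $p_k' = k\, p_{k-1}$ for all $k \ge 1$. Then for every smooth $f : \mathbb{R} \to \mathbb{R}$, all $n, a \in \mathbb{N}$, and all $x \in \mathbb{R}$: $\frac{d^a}{dx^a}\big[p_n(x) f(x)\big] = \sum_{m=0}^{n} \binom{n}{m} (a)_m\, p_{n-m}(x)\, f^{(a-m)}(x)$, where summands with $m > a$ vanish because $(a)_m = 0$ (so the derivative order $a-m$ may be read as truncated natural subtraction). -/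
/-- The falling factorial `(a)_m = a (a-1) ⋯ (a-m+1)`. -/
noncomputable def fallingFactorial (a : ℝ) (m : ℕ) : ℝ :=
  ∏ i ∈ Finset.range m, (a - i)

lemma ff_zero (a : ℝ) : fallingFactorial a 0 = 1 := by simp [fallingFactorial]

lemma ff_succ (a : ℝ) (m : ℕ) :
    fallingFactorial a (m + 1) = fallingFactorial a m * (a - m) := by
  simp [fallingFactorial, Finset.prod_range_succ]

lemma ff_succ' (a : ℝ) (m : ℕ) :
    fallingFactorial (a + 1) (m + 1) = (a + 1) * fallingFactorial a m := by
  rw [fallingFactorial, Finset.prod_range_succ', fallingFactorial]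
  push_cast
  ring_nf

lemma ff_rec (a : ℝ) (m : ℕ) :
    fallingFactorial (a + 1) (m + 1)
      = fallingFactorial a (m + 1) + ((m : ℝ) + 1) * fallingFactorial a m := by
  rw [ff_succ', ff_succ]; ring

lemma ff_nat_eq_zero {a m : ℕ} (h : a < m) : fallingFactorial (a : ℝ) m = 0 := by
  apply Finset.prod_eq_zero (Finset.mem_range.2 h)
  simp

/-- Integer-order case of the paper's Theorem 4.1: truncated Leibniz rule for
the product of an Appell-sequence polynomial and a smooth function. -/
theorem truncated_leibniz_appell (p : ℕ → Polynomial ℝ)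
    (hp0 : Polynomial.derivative (p 0) = 0)
    (hp : ∀ k : ℕ, 1 ≤ k → Polynomial.derivative (p k) = (k : Polynomial ℝ) * p (k - 1))
    (f : ℝ → ℝ) (hf : ContDiff ℝ (⊤ : ℕ∞) f) (n a : ℕ) (x : ℝ) :
    iteratedDeriv a (fun y => (p n).eval y * f y) x =
      ∑ m ∈ Finset.range (n + 1),
        (n.choose m : ℝ) * fallingFactorial (a : ℝ) m * (p (n - m)).eval x *
          iteratedDeriv (a - m) f x := by
  have hdiff : ∀ j : ℕ, Differentiable ℝ (iteratedDeriv j f) := fun j =>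
    hf.differentiable_iteratedDeriv j (by exact_mod_cast ENat.coe_lt_top j)
  induction a generalizing x with
  | zero =>
    rw [iteratedDeriv_zero]
    rw [Finset.sum_eq_single_of_mem 0 (Finset.mem_range.2 (Nat.succ_pos n))]
    · simp [ff_zero]
    · intro m _ hm
      rw [ff_nat_eq_zero (Nat.pos_of_ne_zero hm)]
      ring
  | succ a ih =>
    rw [iteratedDeriv_succ]
    have hIH : iteratedDeriv a (fun y => (p n).eval y * f y) =
        fun y => ∑ m ∈ Finset.range (n + 1),
          (n.choose m : ℝ) * fallingFactorial (a : ℝ) m * (p (n - m)).eval y *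
            iteratedDeriv (a - m) f y := funext fun y => ih y
    rw [hIH]
    -- derivative of each summand
    have key : ∀ m : ℕ, HasDerivAt
        (fun y => (n.choose m : ℝ) * fallingFactorial (a : ℝ) m * (p (n - m)).eval y *
          iteratedDeriv (a - m) f y)
        ((n.choose m : ℝ) * fallingFactorial (a : ℝ) m *
          ((Polynomial.derivative (p (n - m))).eval x * iteratedDeriv (a - m) f x +
            (p (n - m)).eval x * iteratedDeriv (a - m + 1) f x)) x := by
      intro m
      have h1 : HasDerivAt (fun y => (p (n - m)).eval y)
          ((Polynomial.derivative (p (n - m))).eval x) x := (p (n - m)).hasDerivAt x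
      have h2 : HasDerivAt (iteratedDeriv (a - m) f) (iteratedDeriv (a - m + 1) f x) x := by
        have := ((hdiff (a - m)) x).hasDerivAt
        rwa [show deriv (iteratedDeriv (a - m) f) x = iteratedDeriv (a - m + 1) f x from
          by rw [iteratedDeriv_succ]] at this
      have := (h1.fun_mul h2).const_mul ((n.choose m : ℝ) * fallingFactorial (a : ℝ) m)
      exact this.congr_of_eventuallyEq (Filter.Eventually.of_forall fun y => by ring)
    rw [deriv_fun_sum (fun m _ => (key m).differentiableAt)]
    have hderiv : ∀ m ∈ Finset.range (n + 1),
        deriv (fun y => (n.choose m : ℝ) * fallingFactorial (a : ℝ) m * (p (n - m)).eval y *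
          iteratedDeriv (a - m) f y) x =
        (n.choose m : ℝ) * fallingFactorial (a : ℝ) m *
          ((Polynomial.derivative (p (n - m))).eval x * iteratedDeriv (a - m) f x +
            (p (n - m)).eval x * iteratedDeriv (a - m + 1) f x) := fun m _ => (key m).deriv
    rw [Finset.sum_congr rfl hderiv]
    -- split into two sums
    have split : ∀ m ∈ Finset.range (n + 1),
        (n.choose m : ℝ) * fallingFactorial (a : ℝ) m *
          ((Polynomial.derivative (p (n - m))).eval x * iteratedDeriv (a - m) f x +
            (p (n - m)).eval x * iteratedDeriv (a - m + 1) f x)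
        = (n.choose m : ℝ) * fallingFactorial (a : ℝ) m *
            (Polynomial.derivative (p (n - m))).eval x * iteratedDeriv (a - m) f x
          + (n.choose m : ℝ) * fallingFactorial (a : ℝ) m *
            (p (n - m)).eval x * iteratedDeriv (a + 1 - m) f x := by
      intro m _
      by_cases hm : m ≤ a
      · rw [show a + 1 - m = a - m + 1 by omega]; ring
      · rw [ff_nat_eq_zero (by omega : a < m)]; ring
    rw [Finset.sum_congr rfl split, Finset.sum_add_distrib]
    -- Claim B: the first sum equals the "m * ff(a, m-1)" part
    have claimB :
        (∑ m ∈ Finset.range (n + 1),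
          (n.choose m : ℝ) * fallingFactorial (a : ℝ) m *
            (Polynomial.derivative (p (n - m))).eval x * iteratedDeriv (a - m) f x)
        = ∑ m ∈ Finset.range (n + 1),
            (n.choose m : ℝ) * ((m : ℝ) * fallingFactorial (a : ℝ) (m - 1)) *
              (p (n - m)).eval x * iteratedDeriv (a + 1 - m) f x := by
      rw [Finset.sum_range_succ, Finset.sum_range_succ' _ n]
      rw [Nat.sub_self, hp0]
      simp only [Polynomial.eval_zero, mul_zero, zero_mul, add_zero, Nat.cast_zero, zero_add]
      refine Finset.sum_congr rfl fun m hm => ?_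
      have hmn : m < n := Finset.mem_range.1 hm
      rw [hp (n - m) (by omega)]
      have hcast : (n.choose m : ℝ) * ((n - m : ℕ) : ℝ)
          = (n.choose (m + 1) : ℝ) * ((m : ℝ) + 1) := by
        have h := Nat.choose_succ_right_eq n m
        have : (n.choose (m + 1) * (m + 1) : ℕ) = (n.choose m * (n - m) : ℕ) := h
        exact_mod_cast this.symm
      rw [show m + 1 - 1 = m from rfl, show a + 1 - (m + 1) = a - m from Nat.succ_sub_succ a m,
        show n - (m + 1) = n - m - 1 from (Nat.sub_sub n m 1).symm]
      simp only [Polynomial.eval_mul, Polynomial.eval_natCast]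
      push_cast [hcast]
      linear_combination fallingFactorial (a : ℝ) m * (p (n - m - 1)).eval x *
        iteratedDeriv (a - m) f x * hcast
    rw [claimB, ← Finset.sum_add_distrib]
    refine Finset.sum_congr rfl fun m _ => ?_
    have hffa : ((a + 1 : ℕ) : ℝ) = (a : ℝ) + 1 := by push_cast; ring
    rw [hffa]
    cases m with
    | zero => simp [ff_zero]
    | succ k =>
      rw [ff_rec]
      push_cast
      ring
end

section
/- Let $f : \mathbb{R} \to \mathbb{R}$ be smooth and let $n, a \in \mathbb{N}$. Then for all $x \in \mathbb{R}$, $\frac{d^a}{dx^a}\big[x^{(n)} f(x)\big] = \sum_{m=0}^{n} \sum_{u=0}^{m} \binom{n}{m}\, (-1)^{m+u} S_1(m,u)\, x^{(n-m)}\, (a)_u\, f^{(a-u)}(x)$, where $x^{(j)} = x(x+1)\cdots(x+j-1)$ is the rising factorial polynomial evaluated at $x$, $(-1)^{m+u} S_1(m,u)$ equals the unsigned Stirling number of the first kind (the coefficient of $x^u$ in $x^{(m)}$), and summands with $u > a$ vanish because $(a)_u = 0$ (so the derivative order $a-u$ may be read as truncated natural subtraction). -/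
/-- The rising factorial `x⁽ⁿ⁾ = x (x+1) ⋯ (x+n-1)`. -/
noncomputable def risingFactorial (x : ℝ) (n : ℕ) : ℝ :=
  ∏ i ∈ Finset.range n, (x + i)

/-- The signed Stirling numbers of the first kind `S₁(n,m)`: the coefficient of `xᵐ`
in the falling factorial polynomial `x (x-1) ⋯ (x-n+1)`. -/
noncomputable def stirlingFirst (n m : ℕ) : ℝ :=
  (descPochhammer ℝ n).coeff m

open Polynomial Finset

lemma risingFactorial_eval (n : ℕ) (x : ℝ) :
    (ascPochhammer ℝ n).eval x = risingFactorial x n := by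
  induction n with
  | zero => simp [risingFactorial]
  | succ n ih =>
    rw [ascPochhammer_succ_eval, ih, risingFactorial, risingFactorial, Finset.prod_range_succ]

lemma contDiff_risingFactorial (n : ℕ) :
    ContDiff ℝ (⊤ : ℕ∞) (fun y : ℝ => risingFactorial y n) := by
  simp only [risingFactorial]
  induction n with
  | zero => simpa using contDiff_const
  | succ n ih =>
    simp only [Finset.prod_range_succ]
    exact ih.mul (contDiff_id.add contDiff_const)

lemma iteratedDeriv_polyEval (u : ℕ) (p : ℝ[X]) (x : ℝ) :
    iteratedDeriv u (fun y => p.eval y) x = ((derivative (R := ℝ))^[u] p).eval x := by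
  induction u generalizing p x with
  | zero => simp
  | succ u ih =>
    rw [iteratedDeriv_succ']
    have : (deriv fun y => p.eval y) = fun y => p.derivative.eval y := by
      funext y; exact p.deriv
    rw [this, ih, Function.iterate_succ_apply]

lemma fallingFactorial_of_lt {a u : ℕ} (h : a < u) : fallingFactorial (a : ℝ) u = 0 := by
  refine Finset.prod_eq_zero (Finset.mem_range.mpr h) ?_
  simp

lemma fallingFactorial_eq {a u : ℕ} (h : u ≤ a) :
    fallingFactorial (a : ℝ) u = (a.choose u : ℝ) * (Nat.factorial u : ℝ) := by
  have : fallingFactorial (a : ℝ) u = ((a.descFactorial u : ℕ) : ℝ) := by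
    rw [Nat.descFactorial_eq_prod_range, Nat.cast_prod, fallingFactorial]
    refine Finset.prod_congr rfl fun i hi => ?_
    have : i ≤ a := le_trans (Finset.mem_range.mp hi).le h
    push_cast [this]; ring
  rw [this, Nat.descFactorial_eq_factorial_mul_choose]
  push_cast; ring

lemma desc_coeff (m : ℕ) : ∀ u : ℕ,
    (descPochhammer ℝ m).coeff u = (-1 : ℝ) ^ (m + u) * (ascPochhammer ℝ m).coeff u := by
  induction m with
  | zero =>
    intro u
    rcases u with _ | u <;> simp [descPochhammer, ascPochhammer, Polynomial.coeff_one]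
  | succ m ih =>
    intro u
    rw [descPochhammer_succ_right, ascPochhammer_succ_right, ← Polynomial.C_eq_natCast,
      sub_eq_add_neg, ← Polynomial.C_neg, mul_add, mul_add,
      Polynomial.coeff_add, Polynomial.coeff_add, Polynomial.coeff_mul_C, Polynomial.coeff_mul_C]
    rcases u with _ | u
    · simp only [Polynomial.coeff_mul_X_zero, ih 0]
      rw [pow_succ]
      ring
    · rw [Polynomial.coeff_mul_X, Polynomial.coeff_mul_X, ih u, ih (u + 1)]
      have h1 : m + 1 + (u + 1) = m + u + 2 := by ring
      have h2 : m + (u + 1) = m + u + 1 := by ring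
      rw [h1, h2, pow_succ, pow_succ]
      ring

lemma asc_coeff_eq_zero {m u : ℕ} (h : m < u) : (ascPochhammer ℝ m).coeff u = 0 := by
  apply Polynomial.coeff_eq_zero_of_natDegree_lt
  rwa [ascPochhammer_natDegree]

lemma asc_comp_add (n : ℕ) (x : ℝ) :
    (ascPochhammer ℝ n).comp (Polynomial.X + Polynomial.C x) =
      ∑ m ∈ Finset.range (n + 1),
        ((n.choose m : ℝ) * risingFactorial x (n - m)) • ascPochhammer ℝ m := by
  induction n with
  | zero => simp [risingFactorial]
  | succ n ih =>
    set c : ℕ → ℝ := fun m => (n.choose m : ℝ) * risingFactorial x (n - m) with hc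
    set E : ℕ → ℝ := fun m => (n.choose m : ℝ) * risingFactorial x (n + 1 - m) with hE
    set d : ℕ → ℝ := fun m => ((n + 1).choose m : ℝ) * risingFactorial x (n + 1 - m) with hd
    have key : ∀ m : ℕ, ascPochhammer ℝ m * (Polynomial.X + Polynomial.C x + (n : ℝ[X])) =
        ascPochhammer ℝ (m + 1) + Polynomial.C (x + (n : ℝ) - m) * ascPochhammer ℝ m := by
      intro m
      rw [ascPochhammer_succ_right]
      simp only [map_add, map_sub, map_natCast]
      ring
    have hrf : ∀ m : ℕ, m ≤ n → risingFactorial x (n - m + 1) =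
        risingFactorial x (n - m) * (x + ((n : ℝ) - m)) := by
      intro m hmn
      rw [risingFactorial, Finset.prod_range_succ, ← risingFactorial]
      have : ((n - m : ℕ) : ℝ) = (n : ℝ) - m := by push_cast [hmn]; ring
      rw [this]
    rw [ascPochhammer_succ_right, Polynomial.mul_comp, Polynomial.add_comp, Polynomial.X_comp,
      Polynomial.natCast_comp, ih, Finset.sum_mul]
    have lhs_eq : ∑ m ∈ Finset.range (n + 1),
        c m • ascPochhammer ℝ m * (Polynomial.X + Polynomial.C x + (n : ℝ[X])) =
        (∑ m ∈ Finset.range (n + 1), c m • ascPochhammer ℝ (m + 1)) +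
        ∑ m ∈ Finset.range (n + 1), E m • ascPochhammer ℝ m := by
      rw [← Finset.sum_add_distrib]
      refine Finset.sum_congr rfl fun m hm => ?_
      have hmn : m ≤ n := Nat.lt_succ_iff.mp (Finset.mem_range.mp hm)
      rw [smul_mul_assoc, key m, smul_add]
      congr 1
      rw [← Polynomial.smul_eq_C_mul, smul_smul]
      congr 1
      have h1 : n + 1 - m = n - m + 1 := by omega
      rw [hE, hc]
      simp only
      rw [h1, hrf m hmn]
      ring
    rw [lhs_eq]
    rw [Finset.sum_range_succ' (fun m => d m • ascPochhammer ℝ m) (n + 1)]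
    have hd_split : ∀ m ∈ Finset.range (n + 1),
        d (m + 1) • ascPochhammer ℝ (m + 1) =
          c m • ascPochhammer ℝ (m + 1) + E (m + 1) • ascPochhammer ℝ (m + 1) := by
      intro m hm
      rw [← add_smul]
      congr 1
      rw [hd, hc, hE]
      simp only
      have h1 : n + 1 - (m + 1) = n - m := by omega
      rw [h1, Nat.choose_succ_succ n m]
      push_cast
      ring
    rw [Finset.sum_congr rfl hd_split, Finset.sum_add_distrib]
    have hB : ∑ m ∈ Finset.range (n + 1), E m • ascPochhammer ℝ m =
        (∑ m ∈ Finset.range (n + 1), E (m + 1) • ascPochhammer ℝ (m + 1)) +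
          d 0 • ascPochhammer ℝ 0 := by
      have h0 : d 0 = E 0 := by simp [hd, hE]
      have hsucc := Finset.sum_range_succ' (fun m => E m • ascPochhammer ℝ m) (n + 1)
      rw [Finset.sum_range_succ (fun m => E m • ascPochhammer ℝ m) (n + 1)] at hsucc
      have hEtop : E (n + 1) = 0 := by
        simp [hE, Nat.choose_succ_self]
      rw [hEtop, zero_smul, add_zero] at hsucc
      rw [hsucc, h0]
    rw [hB]
    ring

lemma leibniz_iteratedDeriv (g f : ℝ → ℝ) (hg : ContDiff ℝ (⊤ : ℕ∞) g) (hf : ContDiff ℝ (⊤ : ℕ∞) f) :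
    ∀ (a : ℕ) (x : ℝ), iteratedDeriv a (fun y => g y * f y) x =
      ∑ u ∈ Finset.range (a + 1),
        (a.choose u : ℝ) * iteratedDeriv u g x * iteratedDeriv (a - u) f x := by
  intro a
  induction a with
  | zero => intro x; simp
  | succ a ih =>
    intro x
    have hdg : ∀ u : ℕ, Differentiable ℝ (iteratedDeriv u g) := fun u =>
      hg.differentiable_iteratedDeriv u (by exact_mod_cast lt_top_iff_ne_top.mpr (by simp))
    have hdf : ∀ u : ℕ, Differentiable ℝ (iteratedDeriv u f) := fun u =>
      hf.differentiable_iteratedDeriv u (by exact_mod_cast lt_top_iff_ne_top.mpr (by simp))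
    have hfun : iteratedDeriv a (fun y => g y * f y) = fun x =>
        ∑ u ∈ Finset.range (a + 1),
          (a.choose u : ℝ) * iteratedDeriv u g x * iteratedDeriv (a - u) f x :=
      funext ih
    rw [iteratedDeriv_succ, hfun]
    rw [deriv_fun_sum (fun u _ => by
      exact (((hdg u x).const_mul _).mul (hdf (a - u) x)))]
    have hterm : ∀ u ∈ Finset.range (a + 1),
        deriv (fun x => (a.choose u : ℝ) * iteratedDeriv u g x * iteratedDeriv (a - u) f x) x =
          (a.choose u : ℝ) * iteratedDeriv (u + 1) g x * iteratedDeriv (a - u) f x +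
          (a.choose u : ℝ) * iteratedDeriv u g x * iteratedDeriv (a + 1 - u) f x := by
      intro u hu
      have hu' : u ≤ a := Nat.lt_succ_iff.mp (Finset.mem_range.mp hu)
      have h1 : a + 1 - u = (a - u) + 1 := by omega
      rw [deriv_fun_mul ((hdg u x).const_mul _) (hdf (a - u) x), deriv_const_mul _ (hdg u x),
        h1, iteratedDeriv_succ, iteratedDeriv_succ]
      try ring
    rw [Finset.sum_congr rfl hterm, Finset.sum_add_distrib]
    -- now combinatorics
    set T : ℕ → ℝ := fun u => iteratedDeriv u g x * iteratedDeriv (a + 1 - u) f x with hT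
    have e1 : ∑ u ∈ Finset.range (a + 1),
        (a.choose u : ℝ) * iteratedDeriv (u + 1) g x * iteratedDeriv (a - u) f x =
        ∑ u ∈ Finset.range (a + 1), (a.choose u : ℝ) * T (u + 1) := by
      refine Finset.sum_congr rfl fun u hu => ?_
      have : a + 1 - (u + 1) = a - u := by omega
      rw [hT]; simp only [this]; ring
    have e2 : ∑ u ∈ Finset.range (a + 1),
        (a.choose u : ℝ) * iteratedDeriv u g x * iteratedDeriv (a + 1 - u) f x =
        ∑ u ∈ Finset.range (a + 1), (a.choose u : ℝ) * T u := by
      refine Finset.sum_congr rfl fun u hu => ?_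
      rw [hT]; ring
    rw [e1, e2]
    have goal_eq : ∑ u ∈ Finset.range (a + 2),
        ((a + 1).choose u : ℝ) * iteratedDeriv u g x * iteratedDeriv (a + 1 - u) f x =
        ∑ u ∈ Finset.range (a + 2), ((a + 1).choose u : ℝ) * T u := by
      refine Finset.sum_congr rfl fun u hu => ?_
      rw [hT]; ring
    rw [goal_eq, Finset.sum_range_succ' (fun u => ((a + 1).choose u : ℝ) * T u) (a + 1)]
    have hsplit : ∀ u ∈ Finset.range (a + 1),
        ((a + 1).choose (u + 1) : ℝ) * T (u + 1) =
          (a.choose u : ℝ) * T (u + 1) + (a.choose (u + 1) : ℝ) * T (u + 1) := by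
      intro u _
      rw [Nat.choose_succ_succ]
      push_cast
      ring
    rw [Finset.sum_congr rfl hsplit, Finset.sum_add_distrib]
    have hlast : ∑ u ∈ Finset.range (a + 1), (a.choose (u + 1) : ℝ) * T (u + 1) +
        ((a + 1).choose 0 : ℝ) * T 0 = ∑ u ∈ Finset.range (a + 1), (a.choose u : ℝ) * T u := by
      have hsucc := Finset.sum_range_succ' (fun u => (a.choose u : ℝ) * T u) (a + 1)
      rw [Finset.sum_range_succ (fun u => (a.choose u : ℝ) * T u) (a + 1)] at hsucc
      simp only [Nat.choose_succ_self, Nat.cast_zero, zero_mul, add_zero] at hsucc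
      rw [hsucc]
      simp
    rw [add_assoc, hlast]

lemma iteratedDeriv_rising (n u : ℕ) (x : ℝ) :
    iteratedDeriv u (fun y => risingFactorial y n) x =
      (Nat.factorial u : ℝ) * ∑ m ∈ Finset.range (n + 1),
        (n.choose m : ℝ) * risingFactorial x (n - m) * (ascPochhammer ℝ m).coeff u := by
  have h1 : (fun y => risingFactorial y n) = fun y => (ascPochhammer ℝ n).eval y :=
    funext fun y => (risingFactorial_eval n y).symm
  rw [h1, iteratedDeriv_polyEval]
  have h2 : (Polynomial.derivative (R := ℝ))^[u] (ascPochhammer ℝ n) =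
      Nat.factorial u • Polynomial.hasseDeriv u (ascPochhammer ℝ n) := by
    rw [← Polynomial.factorial_smul_hasseDeriv]
    rfl
  rw [h2]
  have h3 : (Polynomial.hasseDeriv u (ascPochhammer ℝ n)).eval x =
      ((Polynomial.taylor x (ascPochhammer ℝ n)).coeff u) :=
    (Polynomial.taylor_coeff (r := x) (f := ascPochhammer ℝ n) u).symm
  rw [Polynomial.eval_smul, h3, Polynomial.taylor_apply, asc_comp_add,
    Polynomial.finset_sum_coeff]
  rw [nsmul_eq_mul]
  congr 1


/-- Integer-order case of the paper's Theorem 4.6 (with the sign factor `(-1)^m`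
restored): truncated Leibniz rule for the product of the rising factorial `x⁽ⁿ⁾`
and a smooth function. -/
theorem truncated_leibniz_risingFactorial (f : ℝ → ℝ) (hf : ContDiff ℝ (⊤ : ℕ∞) f)
    (n a : ℕ) (x : ℝ) :
    iteratedDeriv a (fun y => risingFactorial y n * f y) x =
      ∑ m ∈ Finset.range (n + 1), ∑ u ∈ Finset.range (m + 1),
        (n.choose m : ℝ) * (-1 : ℝ) ^ (m + u) * stirlingFirst m u *
          risingFactorial x (n - m) * fallingFactorial (a : ℝ) u *
          iteratedDeriv (a - u) f x := by
  classical
  set F : ℕ → ℝ := fun u => fallingFactorial (a : ℝ) u *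
      (∑ m ∈ Finset.range (n + 1),
        (n.choose m : ℝ) * risingFactorial x (n - m) * (ascPochhammer ℝ m).coeff u) *
      iteratedDeriv (a - u) f x with hF
  have hL : iteratedDeriv a (fun y => risingFactorial y n * f y) x =
      ∑ u ∈ Finset.range (a + 1), F u := by
    rw [leibniz_iteratedDeriv _ f (contDiff_risingFactorial n) hf a x]
    refine Finset.sum_congr rfl fun u hu => ?_
    have hu' : u ≤ a := Nat.lt_succ_iff.mp (Finset.mem_range.mp hu)
    rw [iteratedDeriv_rising]
    simp only [hF]
    rw [fallingFactorial_eq hu']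
    ring
  have step1 : ∀ m u : ℕ,
      (n.choose m : ℝ) * (-1 : ℝ) ^ (m + u) * stirlingFirst m u *
        risingFactorial x (n - m) * fallingFactorial (a : ℝ) u *
        iteratedDeriv (a - u) f x =
      (n.choose m : ℝ) * (ascPochhammer ℝ m).coeff u *
        risingFactorial x (n - m) * fallingFactorial (a : ℝ) u *
        iteratedDeriv (a - u) f x := by
    intro m u
    have hpm : (-1 : ℝ) ^ (m + u) * (-1 : ℝ) ^ (m + u) = 1 := by
      rw [← pow_add]; exact Even.neg_one_pow ⟨m + u, rfl⟩
    have hst : stirlingFirst m u = (-1 : ℝ) ^ (m + u) * (ascPochhammer ℝ m).coeff u :=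
      desc_coeff m u
    rw [hst]
    linear_combination ((n.choose m : ℝ) * (ascPochhammer ℝ m).coeff u *
      risingFactorial x (n - m) * fallingFactorial (a : ℝ) u *
      iteratedDeriv (a - u) f x) * hpm
  have e1 : ∀ m ∈ Finset.range (n + 1),
      (∑ u ∈ Finset.range (m + 1),
        (n.choose m : ℝ) * (-1 : ℝ) ^ (m + u) * stirlingFirst m u *
          risingFactorial x (n - m) * fallingFactorial (a : ℝ) u *
          iteratedDeriv (a - u) f x) =
      ∑ u ∈ Finset.range (n + 1),
        (n.choose m : ℝ) * (ascPochhammer ℝ m).coeff u *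
          risingFactorial x (n - m) * fallingFactorial (a : ℝ) u *
          iteratedDeriv (a - u) f x := by
    intro m hm
    have hmn : m + 1 ≤ n + 1 := Finset.mem_range.mp hm
    rw [Finset.sum_congr rfl fun u _ => step1 m u]
    refine Finset.sum_subset (Finset.range_subset_range.mpr hmn) ?_
    intro u hu hnu
    have hmu : m < u := by
      simp only [Finset.mem_range] at hu hnu
      omega
    rw [asc_coeff_eq_zero hmu]
    ring
  have hR : (∑ m ∈ Finset.range (n + 1), ∑ u ∈ Finset.range (m + 1),
        (n.choose m : ℝ) * (-1 : ℝ) ^ (m + u) * stirlingFirst m u *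
          risingFactorial x (n - m) * fallingFactorial (a : ℝ) u *
          iteratedDeriv (a - u) f x) = ∑ u ∈ Finset.range (n + 1), F u := by
    rw [Finset.sum_congr rfl e1, Finset.sum_comm]
    refine Finset.sum_congr rfl fun u hu => ?_
    simp only [hF]
    rw [Finset.mul_sum, Finset.sum_mul]
    refine Finset.sum_congr rfl fun m hm => ?_
    ring
  have hvanish_a : ∀ u : ℕ, a < u → F u = 0 := by
    intro u h
    simp only [hF]
    rw [fallingFactorial_of_lt h]
    ring
  have hvanish_n : ∀ u : ℕ, n < u → F u = 0 := by
    intro u h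
    simp only [hF]
    have hz : (∑ m ∈ Finset.range (n + 1),
        (n.choose m : ℝ) * risingFactorial x (n - m) * (ascPochhammer ℝ m).coeff u) = 0 := by
      refine Finset.sum_eq_zero fun m hm => ?_
      have hmu : m < u := lt_of_le_of_lt (Nat.lt_succ_iff.mp (Finset.mem_range.mp hm)) h
      rw [asc_coeff_eq_zero hmu]
      ring
    rw [hz]
    ring
  have hboth : ∑ u ∈ Finset.range (a + 1), F u = ∑ u ∈ Finset.range (n + 1), F u := by
    have h1 : ∑ u ∈ Finset.range (a + 1), F u = ∑ u ∈ Finset.range (a + n + 2), F u := by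
      refine Finset.sum_subset (Finset.range_subset_range.mpr (by omega)) ?_
      intro u hu hnu
      refine hvanish_a u ?_
      simp only [Finset.mem_range] at hnu
      omega
    have h2 : ∑ u ∈ Finset.range (n + 1), F u = ∑ u ∈ Finset.range (a + n + 2), F u := by
      refine Finset.sum_subset (Finset.range_subset_range.mpr (by omega)) ?_
      intro u hu hnu
      refine hvanish_n u ?_
      simp only [Finset.mem_range] at hnu
      omega
    rw [h1, h2]
  rw [hL, hR, hboth]
end

section
/- Let $f : \mathbb{R} \to \mathbb{R}$ be smooth and let $m \in \mathbb{N}$. Then for all $x \in \mathbb{R}$, $\frac{d^m}{dx^m}\big[f(e^x)\big] = \sum_{v=0}^{m} S_2(m,v)\, e^{v x}\, f^{(v)}(e^x)$. -/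
/-- The Stirling numbers of the second kind
`S₂(n,m) = (1/m!) ∑_{j=0}^{m} (-1)^{m-j} C(m,j) jⁿ`. -/
noncomputable def stirlingSecond (n m : ℕ) : ℝ :=
  (1 / (m.factorial : ℝ)) *
    ∑ j ∈ Finset.range (m + 1), (-1 : ℝ) ^ (m - j) * (m.choose j : ℝ) * (j : ℝ) ^ n

lemma stirling_zero_zero : stirlingSecond 0 0 = 1 := by
  simp [stirlingSecond]

lemma stirling_succ_zero (n : ℕ) : stirlingSecond (n+1) 0 = 0 := by
  simp [stirlingSecond]

lemma nat_key (m j : ℕ) : (m+1) * Nat.choose (m+1) j = j * Nat.choose (m+1) j + (m+1) * Nat.choose m j := by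
  cases j with
  | zero => simp
  | succ k =>
    have h1 : Nat.choose (m+1) (k+1) = Nat.choose m k + Nat.choose m (k+1) := Nat.choose_succ_succ m k
    have h2 : (m+1) * Nat.choose m k = Nat.choose (m+1) (k+1) * (k+1) := Nat.add_one_mul_choose_eq m k
    nlinarith [h1, h2]

lemma stirling_rec (n m : ℕ) :
    stirlingSecond (n+1) (m+1) = ((m:ℝ)+1) * stirlingSecond n (m+1) + stirlingSecond n m := by
  have key : ∑ j ∈ Finset.range (m+2), (-1:ℝ)^(m+1-j) * ((m+1).choose j : ℝ) * (j:ℝ)^(n+1)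
      = ((m:ℝ)+1) * ∑ j ∈ Finset.range (m+2), (-1:ℝ)^(m+1-j) * ((m+1).choose j : ℝ) * (j:ℝ)^n
        + ((m:ℝ)+1) * ∑ j ∈ Finset.range (m+1), (-1:ℝ)^(m-j) * (m.choose j : ℝ) * (j:ℝ)^n := by
    have hext : ∑ j ∈ Finset.range (m+1), (-1:ℝ)^(m-j) * (m.choose j : ℝ) * (j:ℝ)^n
        = ∑ j ∈ Finset.range (m+2), (-1:ℝ)^(m-j) * (m.choose j : ℝ) * (j:ℝ)^n := by
      conv_rhs => rw [Finset.sum_range_succ]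
      rw [Nat.choose_succ_self]
      simp
    rw [hext, Finset.mul_sum, Finset.mul_sum, ← Finset.sum_add_distrib]
    apply Finset.sum_congr rfl
    intro j hj
    rw [Finset.mem_range] at hj
    have hN : ((m:ℝ)+1) * ((m+1).choose j : ℝ) = (j:ℝ) * ((m+1).choose j : ℝ) + ((m:ℝ)+1) * (m.choose j : ℝ) := by
      exact_mod_cast nat_key m j
    rcases Nat.lt_or_ge j (m+1) with h | h
    · have e1 : m + 1 - j = (m - j) + 1 := by omega
      rw [e1, pow_succ]
      linear_combination ((-1:ℝ)^(m-j) * (j:ℝ)^n) * hN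
    · have e2 : j = m + 1 := by omega
      subst e2
      simp [Nat.choose_succ_self]
      ring
  have hfac : ((m+1).factorial : ℝ) = ((m:ℝ)+1) * (m.factorial : ℝ) := by
    rw [Nat.factorial_succ]; push_cast; ring
  have hm0 : (m.factorial : ℝ) ≠ 0 := Nat.cast_ne_zero.mpr (Nat.factorial_ne_zero m)
  have hm1 : ((m:ℝ)+1) ≠ 0 := by positivity
  unfold stirlingSecond
  rw [show m+1+1 = m+2 from rfl, hfac]
  calc (1 / (((m:ℝ)+1) * (m.factorial:ℝ))) *
        ∑ j ∈ Finset.range (m+2), (-1:ℝ)^(m+1-j) * ((m+1).choose j : ℝ) * (j:ℝ)^(n+1)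
      = (1 / (((m:ℝ)+1) * (m.factorial:ℝ))) *
        (((m:ℝ)+1) * ∑ j ∈ Finset.range (m+2), (-1:ℝ)^(m+1-j) * ((m+1).choose j : ℝ) * (j:ℝ)^n
          + ((m:ℝ)+1) * ∑ j ∈ Finset.range (m+1), (-1:ℝ)^(m-j) * (m.choose j : ℝ) * (j:ℝ)^n) := by
        rw [key]
    _ = ((m:ℝ)+1) * ((1 / (((m:ℝ)+1) * (m.factorial:ℝ))) *
          ∑ j ∈ Finset.range (m+2), (-1:ℝ)^(m+1-j) * ((m+1).choose j : ℝ) * (j:ℝ)^n)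
        + (1 / (m.factorial:ℝ)) *
          ∑ j ∈ Finset.range (m+1), (-1:ℝ)^(m-j) * (m.choose j : ℝ) * (j:ℝ)^n := by
        field_simp

lemma stirling_eq_zero : ∀ n m : ℕ, n < m → stirlingSecond n m = 0 := by
  intro n
  induction n with
  | zero =>
    intro m hm
    have h := Int.alternating_sum_range_choose_of_ne (n := m) (by omega)
    have h' : (∑ j ∈ Finset.range (m+1), ((-1:ℝ)^j * (m.choose j : ℝ))) = 0 := by
      have := congrArg (fun z : ℤ => (z : ℝ)) h
      push_cast at this
      exact this
    unfold stirlingSecond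
    have : ∑ j ∈ Finset.range (m+1), (-1:ℝ)^(m-j) * (m.choose j : ℝ) * (j:ℝ)^0
        = (-1:ℝ)^m * ∑ j ∈ Finset.range (m+1), ((-1:ℝ)^j * (m.choose j : ℝ)) := by
      rw [Finset.mul_sum]
      apply Finset.sum_congr rfl
      intro j hj
      rw [Finset.mem_range] at hj
      have e : m - j + 2 * j = m + j := by omega
      have : (-1:ℝ)^(m-j) = (-1:ℝ)^(m+j) := by
        rw [← e, pow_add, pow_mul]; norm_num
      rw [this, pow_add]
      ring
    rw [this, h']
    ring
  | succ n ih =>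
    intro m hm
    obtain ⟨k, rfl⟩ : ∃ k, m = k + 1 := ⟨m - 1, by omega⟩
    rw [stirling_rec]
    rw [ih (k+1) (by omega), ih k (by omega)]
    ring

lemma alg (m : ℕ) (T : ℕ → ℝ) :
    ∑ v ∈ Finset.range (m+1), ((v:ℝ) * (stirlingSecond m v * T v) + stirlingSecond m v * T (v+1))
      = ∑ v ∈ Finset.range (m+2), stirlingSecond (m+1) v * T v := by
  rw [Finset.sum_add_distrib]
  rw [Finset.sum_range_succ' (fun v => stirlingSecond (m+1) v * T v) (m+1)]
  rw [stirling_succ_zero]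
  simp only [zero_mul, add_zero]
  have hrec : ∑ v ∈ Finset.range (m+1), stirlingSecond (m+1) (v+1) * T (v+1)
      = ∑ v ∈ Finset.range (m+1), (((v:ℝ)+1) * (stirlingSecond m (v+1) * T (v+1)) + stirlingSecond m v * T (v+1)) := by
    apply Finset.sum_congr rfl
    intro v _
    rw [stirling_rec]
    ring
  rw [hrec, Finset.sum_add_distrib]
  have hA : ∑ v ∈ Finset.range (m+1), ((v:ℝ) * (stirlingSecond m v * T v))
      = ∑ v ∈ Finset.range (m+1), (((v:ℝ)+1) * (stirlingSecond m (v+1) * T (v+1))) := by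
    set g : ℕ → ℝ := fun w => (w:ℝ) * (stirlingSecond m w * T w) with hg
    have e1 : ∑ w ∈ Finset.range (m+2), g w = ∑ w ∈ Finset.range (m+1), g w + g (m+1) :=
      Finset.sum_range_succ g (m+1)
    have e2 : ∑ w ∈ Finset.range (m+2), g w = ∑ v ∈ Finset.range (m+1), g (v+1) + g 0 :=
      Finset.sum_range_succ' g (m+1)
    have h0 : g 0 = 0 := by simp [hg]
    have htop : g (m+1) = 0 := by
      simp only [hg]
      rw [stirling_eq_zero m (m+1) (by omega)]
      ring
    have : ∑ w ∈ Finset.range (m+1), g w = ∑ v ∈ Finset.range (m+1), g (v+1) := by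
      rw [h0] at e2; rw [htop] at e1; linarith
    rw [this]
    apply Finset.sum_congr rfl
    intro v _
    simp only [hg]
    push_cast
    ring
  rw [hA]

lemma term_hasDerivAt (c : ℝ) (v : ℕ) (h : ℝ → ℝ) (hd : Differentiable ℝ h) (x : ℝ) :
    HasDerivAt (fun y => c * Real.exp (v * y) * h (Real.exp y))
      ((v:ℝ) * (c * Real.exp (v * x) * h (Real.exp x))
        + c * (Real.exp (v * x) * Real.exp x) * deriv h (Real.exp x)) x := by
  have h1 : HasDerivAt (fun y : ℝ => c * Real.exp (v * y)) (c * (Real.exp (v * x) * v)) x := by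
    have : HasDerivAt (fun y : ℝ => Real.exp (v * y)) (Real.exp (v * x) * v) x := by
      have hid : HasDerivAt (fun y : ℝ => (v:ℝ) * y) (v:ℝ) x := by
        simpa using (hasDerivAt_id x).const_mul (v:ℝ)
      exact (Real.hasDerivAt_exp ((v:ℝ) * x)).comp x hid
    exact this.const_mul c
  have h2 : HasDerivAt (fun y : ℝ => h (Real.exp y)) (deriv h (Real.exp x) * Real.exp x) x :=
    (hd (Real.exp x)).hasDerivAt.comp x (Real.hasDerivAt_exp x)
  have := h1.fun_mul h2
  exact this.congr_deriv (by ring)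

/-- The paper's Lemma 4.8: the `m`-th derivative of `f ∘ exp`. -/
theorem iteratedDeriv_comp_exp (f : ℝ → ℝ) (hf : ContDiff ℝ (⊤ : ℕ∞) f) (m : ℕ) (x : ℝ) :
    iteratedDeriv m (fun y => f (Real.exp y)) x =
      ∑ v ∈ Finset.range (m + 1),
        stirlingSecond m v * Real.exp (v * x) * iteratedDeriv v f (Real.exp x) := by
  have hf' : ContDiff ℝ (⊤ : ℕ∞) f := hf.of_le (by simp)
  have hfd : ∀ v : ℕ, Differentiable ℝ (iteratedDeriv v f) := by
    intro v
    rw [iteratedDeriv_eq_iterate]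
    exact (hf'.iterate_deriv v).differentiable (by simp)
  induction m generalizing x with
  | zero =>
    simp [stirling_zero_zero]
  | succ m ih =>
    rw [iteratedDeriv_succ]
    have hfun : iteratedDeriv m (fun y => f (Real.exp y))
        = fun y => ∑ v ∈ Finset.range (m+1),
            stirlingSecond m v * Real.exp (v * y) * iteratedDeriv v f (Real.exp y) :=
      funext ih
    rw [hfun]
    have hsum : HasDerivAt
        (fun y => ∑ v ∈ Finset.range (m+1),
            stirlingSecond m v * Real.exp (v * y) * iteratedDeriv v f (Real.exp y))
        (∑ v ∈ Finset.range (m+1),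
          ((v:ℝ) * (stirlingSecond m v * Real.exp (v * x) * iteratedDeriv v f (Real.exp x))
            + stirlingSecond m v * (Real.exp (v * x) * Real.exp x)
              * deriv (iteratedDeriv v f) (Real.exp x))) x :=
      HasDerivAt.fun_sum fun v _ => term_hasDerivAt (stirlingSecond m v) v (iteratedDeriv v f) (hfd v) x
    rw [hsum.deriv]
    have halg := alg m (fun v => Real.exp (v * x) * iteratedDeriv v f (Real.exp x))
    refine Eq.trans ?_ (Eq.trans halg ?_)
    · apply Finset.sum_congr rfl
      intro v _
      rw [← iteratedDeriv_succ,
        show (((v+1:ℕ)):ℝ) * x = (v:ℝ) * x + x by push_cast; ring, Real.exp_add]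
      ring
    · exact Finset.sum_congr rfl fun v _ => (mul_assoc _ _ _).symm
end

section
/- Let $\alpha, y \in \mathbb{R}$ and $m \in \mathbb{N}$, and let $r \in \mathbb{R}$ satisfy $y + e^{r} - 1 > 0$. Then $\frac{d^m}{dr^m}\big[(y + e^{r} - 1)^{\alpha}\big] = \sum_{u=0}^{m} S_2(m,u)\, (\alpha)_u\, (y + e^{r} - 1)^{\alpha - u}\, e^{u r}$, where real powers $w^s$ (for $w > 0$, $s \in \mathbb{R}$) denote $e^{s \ln w}$. -/
/-!
Write `g = y + eʳ - 1`, so that `g' = eʳ`. The terms `t_u = (α)_u g^(α-u) e^(ur)` satisfy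
`t_u' = t_(u+1) + u t_u`, which mirrors the recurrence `S(n+1,k) = k S(n,k) + S(n,k-1)` of the
Stirling numbers of the second kind; hence the `m`-th derivative of `t_0 = g^α` is
`∑ S(m,u) t_u`.
The explicit alternating sum satisfies the same recurrence because
`j C(k+1,j) = (k+1) (C(k+1,j) - C(k,j))`.
-/

open Finset Real Filter Topology

/-- Inclusion–exclusion count of the surjections from an `n`-set onto an `m`-set. -/
noncomputable def surjectionCount (n m : ℕ) : ℝ :=
  ∑ j ∈ range (m + 1), (-1 : ℝ) ^ (m - j) * (m.choose j : ℝ) * (j : ℝ) ^ n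

lemma surjectionCount_zero_left (m : ℕ) : surjectionCount 0 m = 0 ^ m := by
  simpa [surjectionCount, mul_comm] using (add_pow (1 : ℝ) (-1) m).symm

lemma natCast_mul_choose_succ {k j : ℕ} (hj : j ≤ k + 1) :
    (j : ℝ) * (k + 1).choose j = (k + 1) * ((k + 1).choose j - k.choose j) := by
  have h := Nat.choose_mul_succ_eq k j
  rw [← Nat.cast_inj (R := ℝ)] at h
  push_cast [Nat.cast_sub hj] at h
  linear_combination h

lemma surjectionCount_succ_succ (n k : ℕ) :
    surjectionCount (n + 1) (k + 1) =
      (k + 1) * (surjectionCount n (k + 1) + surjectionCount n k) := by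
  have hshift :
      ∑ j ∈ range (k + 2), (-1 : ℝ) ^ (k + 1 - j) * (k.choose j : ℝ) * (j : ℝ) ^ n =
        -surjectionCount n k := by
    rw [sum_range_succ, Nat.choose_succ_self, surjectionCount, ← sum_neg_distrib]
    simp only [Nat.cast_zero, mul_zero, zero_mul, add_zero]
    refine sum_congr rfl fun j hj => ?_
    rw [Nat.sub_add_comm (Nat.lt_succ_iff.mp (mem_range.mp hj)), pow_succ]
    ring
  calc surjectionCount (n + 1) (k + 1)
      = ∑ j ∈ range (k + 2), (k + 1) *
          ((-1 : ℝ) ^ (k + 1 - j) * ((k + 1).choose j : ℝ) * (j : ℝ) ^ n -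
            (-1 : ℝ) ^ (k + 1 - j) * (k.choose j : ℝ) * (j : ℝ) ^ n) := by
        refine sum_congr rfl fun j hj => ?_
        rw [pow_succ]
        linear_combination (-1 : ℝ) ^ (k + 1 - j) * (j : ℝ) ^ n *
          natCast_mul_choose_succ (Nat.lt_succ_iff.mp (mem_range.mp hj))
    _ = (k + 1) * (surjectionCount n (k + 1) + surjectionCount n k) := by
        rw [← mul_sum, sum_sub_distrib, hshift, sub_neg_eq_add]
        rfl

lemma surjectionCount_eq_factorial_mul_stirlingSecond (n m : ℕ) :
    surjectionCount n m = m.factorial * Nat.stirlingSecond n m := by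
  induction n generalizing m with
  | zero => cases m <;> simp [surjectionCount_zero_left]
  | succ n ih =>
    cases m with
    | zero => simp [surjectionCount]
    | succ k =>
      rw [surjectionCount_succ_succ, ih, ih, Nat.stirlingSecond_succ_succ, Nat.factorial_succ]
      push_cast
      ring

lemma stirlingSecond_eq_natStirlingSecond (n m : ℕ) :
    stirlingSecond n m = Nat.stirlingSecond n m := by
  have h := surjectionCount_eq_factorial_mul_stirlingSecond n m
  rw [stirlingSecond, ← surjectionCount, h]
  field_simp

lemma sum_stirlingSecond_succ_smul {M : Type*} [AddCommMonoid M] (a : ℕ → M) (m : ℕ) :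
    ∑ u ∈ range (m + 2), Nat.stirlingSecond (m + 1) u • a u
      = ∑ u ∈ range (m + 1), Nat.stirlingSecond m u • (a (u + 1) + u • a u) := by
  have hshift : ∑ u ∈ range (m + 1), (Nat.stirlingSecond m u * u) • a u
      = ∑ u ∈ range (m + 1), ((u + 1) * Nat.stirlingSecond m (u + 1)) • a (u + 1) := calc
    _ = ∑ u ∈ range (m + 2), (Nat.stirlingSecond m u * u) • a u := by
      simp [sum_range_succ _ (m + 1), Nat.stirlingSecond_eq_zero_of_lt (Nat.lt_succ_self m)]
    _ = _ := by simp [sum_range_succ' _ (m + 1), mul_comm]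
  simp only [sum_range_succ' _ (m + 1), Nat.stirlingSecond_succ_succ,
    Nat.stirlingSecond_succ_zero, zero_smul, add_zero, add_smul, sum_add_distrib, smul_add,
    smul_smul]
  rw [hshift, add_comm]

theorem iteratedDeriv_eq_sum_stirlingSecond_smul {𝕜 F : Type*} [NontriviallyNormedField 𝕜]
    [NormedAddCommGroup F] [NormedSpace 𝕜 F] {U : Set 𝕜} (hU : IsOpen U) {f : ℕ → 𝕜 → F}
    (hf : ∀ u, ∀ x ∈ U, HasDerivAt (f u) (f (u + 1) x + u • f u x) x) (m : ℕ) :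
    ∀ x ∈ U,
      iteratedDeriv m (f 0) x = ∑ u ∈ range (m + 1), Nat.stirlingSecond m u • f u x := by
  induction m with
  | zero => simp
  | succ m ih =>
    intro x hx
    have hloc : iteratedDeriv m (f 0) =ᶠ[𝓝 x]
        fun x => ∑ u ∈ range (m + 1), Nat.stirlingSecond m u • f u x :=
      eventually_of_mem (hU.mem_nhds hx) ih
    rw [iteratedDeriv_succ, hloc.deriv_eq, sum_stirlingSecond_succ_smul]
    exact (HasDerivAt.fun_sum fun u _ =>
      (hf u x hx).const_smul (Nat.stirlingSecond m u)).deriv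

lemma fallingFactorial_succ (a : ℝ) (u : ℕ) :
    fallingFactorial a (u + 1) = fallingFactorial a u * (a - u) :=
  prod_range_succ _ _

noncomputable def rpowExpTerm (α y : ℝ) (u : ℕ) (s : ℝ) : ℝ :=
  fallingFactorial α u * (y + exp s - 1) ^ (α - u) * exp (u * s)

lemma hasDerivAt_rpowExpTerm (α y : ℝ) (u : ℕ) {s : ℝ} (hs : 0 < y + exp s - 1) :
    HasDerivAt (rpowExpTerm α y u)
      (rpowExpTerm α y (u + 1) s + u • rpowExpTerm α y u s) s := by
  have hbase : HasDerivAt (fun s => y + exp s - 1) (exp s) s :=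
    ((hasDerivAt_exp s).const_add y).sub_const 1
  have hexp : HasDerivAt (fun s => exp (u * s)) (exp (u * s) * u) s := by
    simpa using ((hasDerivAt_id s).const_mul (u : ℝ)).exp
  refine (((hbase.rpow_const (p := α - u) (.inl hs.ne')).const_mul
    (fallingFactorial α u)).fun_mul hexp).congr_deriv ?_
  unfold rpowExpTerm
  rw [fallingFactorial_succ, nsmul_eq_mul, Nat.cast_succ,
    sub_add_eq_sub_sub, add_mul, one_mul, exp_add]
  ring

/-- The closed-form derivative from the proof of the paper's Theorem 4.9:
`dᵐ/drᵐ (y + eʳ - 1)^α`, where `^` denotes the real power `Real.rpow`. -/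
theorem iteratedDeriv_rpow_exp (α y : ℝ) (m : ℕ) (r : ℝ)
    (hyr : 0 < y + Real.exp r - 1) :
    iteratedDeriv m (fun s => (y + Real.exp s - 1) ^ α) r =
      ∑ u ∈ Finset.range (m + 1),
        stirlingSecond m u * fallingFactorial α u *
          (y + Real.exp r - 1) ^ (α - u) * Real.exp (u * r) := by
  have hU : IsOpen {s | 0 < y + exp s - 1} := isOpen_lt continuous_const (by fun_prop)
  have hf0 : rpowExpTerm α y 0 = fun s => (y + exp s - 1) ^ α := by
    ext s
    simp [rpowExpTerm, fallingFactorial]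
  rw [← hf0, iteratedDeriv_eq_sum_stirlingSecond_smul hU
    (fun u _ hs => hasDerivAt_rpowExpTerm α y u hs) m r hyr]
  refine sum_congr rfl fun u _ => ?_
  rw [nsmul_eq_mul, ← stirlingSecond_eq_natStirlingSecond, rpowExpTerm]
  ring
end
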